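/- arXiv:1906.04693 — 4 statements merged into one kernel-verified Lean document; each statement's English description precedes it below -/
import Mathlib

section
/- Let ρ be a two-qubit density matrix that admits a local-hidden-state (LHS) model for Bob for all two-outcome POVMs, with hidden-variable space (Λ, μ) and hidden states λ ↦ σ_λ. Let (A_k)_{k ∈ F} be a finite family of 2×2 complex matrices with Σ_k A_k† A_k = I (Kraus operators of a trace-preserving map applied by Alice). Then the two-qubit state ρ' := Σ_k (A_k ⊗ I) ρ (A_k† ⊗ I) also admits an LHS model for Bob for all two-outcome POVMs; moreover, one may take the same hidden-variable space (Λ, μ) and the same hidden states σ_λ, changing only the response functions. -/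
open Matrix MeasureTheory
open scoped ComplexOrder

set_option maxHeartbeats 1000000
noncomputable section

/-- Kronecker product of square complex matrices: `(A ⊗ B)((i,j),(k,l)) = A i k * B j l`. -/
def kron {n m : ℕ} (A : Matrix (Fin n) (Fin n) ℂ) (B : Matrix (Fin m) (Fin m) ℂ) :
    Matrix (Fin n × Fin m) (Fin n × Fin m) ℂ :=
  Matrix.of fun p q => A p.1 q.1 * B p.2 q.2

/-- Partial trace over the first (Alice's) system. -/
def ptrA {n m : ℕ} (M : Matrix (Fin n × Fin m) (Fin n × Fin m) ℂ) :
    Matrix (Fin m) (Fin m) ℂ :=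
  Matrix.of fun j l => ∑ i, M (i, j) (i, l)

/-- A density matrix: positive semidefinite with unit trace. -/
def IsDensityMatrix {n : Type} [Fintype n] [DecidableEq n] (ρ : Matrix n n ℂ) : Prop :=
  ρ.PosSemidef ∧ ρ.trace = 1

/-- A two-outcome POVM effect on a qubit: `E` and `1 - E` positive semidefinite. -/
def IsEffect (E : Matrix (Fin 2) (Fin 2) ℂ) : Prop :=
  E.PosSemidef ∧ (1 - E).PosSemidef

/-- `(Λ, μ, σ, p)` is a local-hidden-state model for Bob, for the two-qubit state `ρ`,
for all two-outcome POVMs. -/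
def IsLHSModel (ρ : Matrix (Fin 2 × Fin 2) (Fin 2 × Fin 2) ℂ)
    (Λ : Type) [MeasurableSpace Λ] (μ : Measure Λ)
    (σ : Λ → Matrix (Fin 2) (Fin 2) ℂ)
    (p : Matrix (Fin 2) (Fin 2) ℂ → Λ → ℝ) : Prop :=
  IsProbabilityMeasure μ ∧
  (∀ j l : Fin 2, Measurable fun lam => σ lam j l) ∧
  (∀ lam, IsDensityMatrix (σ lam)) ∧
  ∀ E : Matrix (Fin 2) (Fin 2) ℂ, IsEffect E →
    Measurable (p E) ∧ (∀ lam, p E lam ∈ Set.Icc (0 : ℝ) 1) ∧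
    ∀ j l : Fin 2, ptrA (kron E 1 * ρ) j l = ∫ lam, (p E lam : ℂ) * σ lam j l ∂μ

lemma kron_key (E B : Matrix (Fin 2) (Fin 2) ℂ) (ρ : Matrix (Fin 2 × Fin 2) (Fin 2 × Fin 2) ℂ)
    (j l : Fin 2) :
    ptrA (kron E 1 * (kron B 1 * ρ * kron Bᴴ 1)) j l = ptrA (kron (Bᴴ * E * B) 1 * ρ) j l := by
  simp [ptrA, kron, Matrix.mul_apply, Fintype.sum_prod_type, Fin.sum_univ_two,
    Matrix.one_apply, Matrix.conjTranspose_apply]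
  ring

/-- If a two-qubit density matrix `ρ` admits an LHS model for Bob for all two-outcome POVMs,
and Alice applies a trace-preserving map with Kraus operators `A k`, then the resulting state
also admits an LHS model for Bob, with the same hidden-variable space `(Λ, μ)` and the same
hidden states `σ`, changing only the response functions. -/
theorem lhs_of_alice_local_operation {F : Type} [Fintype F]
    (ρ : Matrix (Fin 2 × Fin 2) (Fin 2 × Fin 2) ℂ) (hρ : IsDensityMatrix ρ)
    (A : F → Matrix (Fin 2) (Fin 2) ℂ) (hA : ∑ k, (A k)ᴴ * A k = 1)
    (Λ : Type) [MeasurableSpace Λ] (μ : Measure Λ)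
    (σ : Λ → Matrix (Fin 2) (Fin 2) ℂ)
    (p : Matrix (Fin 2) (Fin 2) ℂ → Λ → ℝ)
    (h : IsLHSModel ρ Λ μ σ p) :
    ∃ p' : Matrix (Fin 2) (Fin 2) ℂ → Λ → ℝ,
      IsLHSModel (∑ k, kron (A k) 1 * ρ * kron ((A k)ᴴ) 1) Λ μ σ p' := by
  obtain ⟨hμ, hmeas, hdens, hE⟩ := h
  refine ⟨fun E => p (∑ k, (A k)ᴴ * E * A k), hμ, hmeas, hdens, ?_⟩
  intro E hEeff
  set T : Matrix (Fin 2) (Fin 2) ℂ := ∑ k, (A k)ᴴ * E * A k with hT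
  have hTpsd : T.PosSemidef := by
    apply Finset.sum_induction _ Matrix.PosSemidef (fun a b ha hb => ha.add hb)
      Matrix.PosSemidef.zero
    intro k _
    exact hEeff.1.conjTranspose_mul_mul_same (A k)
  have hTsub : (1 : Matrix (Fin 2) (Fin 2) ℂ) - T = ∑ k, (A k)ᴴ * (1 - E) * A k := by
    simp only [Matrix.mul_sub, Matrix.sub_mul, Matrix.mul_one, Finset.sum_sub_distrib, hA, hT]
  have hTeff : IsEffect T := by
    refine ⟨hTpsd, ?_⟩
    rw [hTsub]
    apply Finset.sum_induction _ Matrix.PosSemidef (fun a b ha hb => ha.add hb)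
      Matrix.PosSemidef.zero
    intro k _
    exact hEeff.2.conjTranspose_mul_mul_same (A k)
  obtain ⟨hm, hb, heq⟩ := hE T hTeff
  refine ⟨hm, hb, fun j l => ?_⟩
  rw [← heq j l]
  have lhs_eq : ptrA (kron E 1 * ∑ k, kron (A k) 1 * ρ * kron ((A k)ᴴ) 1) j l
      = ∑ k, ptrA (kron E 1 * (kron (A k) 1 * ρ * kron ((A k)ᴴ) 1)) j l := by
    simp [ptrA, Finset.mul_sum, Matrix.sum_apply]
    rw [Finset.sum_add_distrib]
  have rhs_eq : ptrA (kron T 1 * ρ) j l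
      = ∑ k, ptrA (kron ((A k)ᴴ * E * A k) 1 * ρ) j l := by
    have hk : kron T (1 : Matrix (Fin 2) (Fin 2) ℂ) = ∑ k, kron ((A k)ᴴ * E * A k) (1 : Matrix (Fin 2) (Fin 2) ℂ) := by
      ext ⟨a, b⟩ ⟨c, d⟩
      simp [kron, hT, Matrix.sum_apply, Finset.sum_mul]
    rw [hk]
    simp [ptrA, Finset.sum_mul, Matrix.sum_apply]
    rw [Finset.sum_add_distrib]
  rw [lhs_eq, rhs_eq]
  exact Finset.sum_congr rfl fun k _ => kron_key E (A k) ρ j l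
end
end

section
/- Let a, b ∈ ℝ³, let T be a real 3×3 matrix, and let ρ := ρ(a,b,T) be the associated Bloch-form two-qubit operator. Let (A_k)_{k ∈ F} be a finite family of 2×2 complex matrices, m ∈ ℝ³ and λ₁, λ₂, λ₃ ∈ ℝ, satisfying Σ_k A_k† A_k = I, Σ_k A_k A_k† = I + Σᵢ mᵢ σᵢ, and Σ_k A_k σⱼ A_k† = λⱼ σⱼ for j = 1,2,3 (so the A_k are Kraus operators of the trace-preserving qubit map Φ_{m,Λ} with Λ = diag(λ₁,λ₂,λ₃)). Then applying this map to Alice's qubit induces the affine transformation of the Bloch data: Σ_k (A_k ⊗ I) ρ (A_k† ⊗ I) = ρ(a', b', T') with a'ᵢ = mᵢ + λᵢ aᵢ, b' = b, and T'ᵢⱼ = λᵢ Tᵢⱼ + mᵢ bⱼ. -/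
open Matrix

noncomputable section

/-- The Pauli matrices `σ₁, σ₂, σ₃`. -/
def pauli : Fin 3 → Matrix (Fin 2) (Fin 2) ℂ :=
  ![!![0, 1; 1, 0], !![0, -Complex.I; Complex.I, 0], !![1, 0; 0, -1]]

/-- The Bloch-form two-qubit operator
`ρ(a,b,T) = (1/4)(I⊗I + ∑ᵢ aᵢ σᵢ⊗I + ∑ⱼ bⱼ I⊗σⱼ + ∑ᵢⱼ Tᵢⱼ σᵢ⊗σⱼ)`. -/
def blochState (a b : Fin 3 → ℝ) (T : Matrix (Fin 3) (Fin 3) ℝ) :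
    Matrix (Fin 2 × Fin 2) (Fin 2 × Fin 2) ℂ :=
  (4 : ℂ)⁻¹ • (kron 1 1 + (∑ i, (a i : ℂ) • kron (pauli i) 1)
    + (∑ j, (b j : ℂ) • kron 1 (pauli j))
    + ∑ i, ∑ j, (T i j : ℂ) • kron (pauli i) (pauli j))
lemma kron_mul {n m : ℕ} (A C : Matrix (Fin n) (Fin n) ℂ) (B D : Matrix (Fin m) (Fin m) ℂ) :
    kron A B * kron C D = kron (A * C) (B * D) := by
  ext ⟨i, j⟩ ⟨k, l⟩
  simp only [kron, of_apply, mul_apply, Fintype.sum_prod_type, Finset.sum_mul_sum]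
  exact Finset.sum_congr rfl fun p _ => Finset.sum_congr rfl fun q _ => by ring

lemma kron_add_left {n m : ℕ} (A B : Matrix (Fin n) (Fin n) ℂ) (C : Matrix (Fin m) (Fin m) ℂ) :
    kron (A + B) C = kron A C + kron B C := by
  ext ⟨i, j⟩ ⟨k, l⟩; simp [kron, add_mul]

lemma kron_smul_left {n m : ℕ} (c : ℂ) (A : Matrix (Fin n) (Fin n) ℂ)
    (C : Matrix (Fin m) (Fin m) ℂ) : kron (c • A) C = c • kron A C := by
  ext ⟨i, j⟩ ⟨k, l⟩; simp [kron, mul_assoc]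

lemma kron_sum_left {ι : Type*} [Fintype ι] {nn mm : ℕ} (f : ι → Matrix (Fin nn) (Fin nn) ℂ)
    (C : Matrix (Fin mm) (Fin mm) ℂ) : kron (∑ k, f k) C = ∑ k, kron (f k) C := by
  ext ⟨i, j⟩ ⟨k, l⟩; simp [kron, Matrix.sum_apply, Finset.sum_mul]

/-- If Alice applies the trace-preserving qubit map `Φ_{m,Λ}` (given by Kraus operators
`A k` with `∑ A_k† A_k = I`, `∑ A_k A_k† = I + ∑ mᵢ σᵢ` and `∑ A_k σⱼ A_k† = λⱼ σⱼ`) to her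
half of the Bloch-form state `ρ(a,b,T)`, the Bloch data transform affinely:
`a'ᵢ = mᵢ + λᵢ aᵢ`, `b' = b`, `T'ᵢⱼ = λᵢ Tᵢⱼ + mᵢ bⱼ`. -/
theorem bloch_transform_of_alice_map {F : Type} [Fintype F]
    (a b : Fin 3 → ℝ) (T : Matrix (Fin 3) (Fin 3) ℝ)
    (A : F → Matrix (Fin 2) (Fin 2) ℂ) (m lam : Fin 3 → ℝ)
    (hTP : ∑ k, (A k)ᴴ * A k = 1)
    (hI : ∑ k, A k * (A k)ᴴ = 1 + ∑ i, (m i : ℂ) • pauli i)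
    (hP : ∀ j, ∑ k, A k * pauli j * (A k)ᴴ = (lam j : ℂ) • pauli j) :
    ∑ k, kron (A k) 1 * blochState a b T * kron ((A k)ᴴ) 1 =
      blochState (fun i => m i + lam i * a i) b
        (Matrix.of fun i j => lam i * T i j + m i * b j) := by
  have key : ∀ (k : F) (X Y : Matrix (Fin 2) (Fin 2) ℂ),
      kron (A k) 1 * kron X Y * kron ((A k)ᴴ) 1 = kron (A k * X * (A k)ᴴ) Y := by
    intro k X Y
    rw [kron_mul, kron_mul, one_mul, mul_one]
  have expand : ∀ k : F, kron (A k) 1 * blochState a b T * kron ((A k)ᴴ) 1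
      = (4 : ℂ)⁻¹ • (kron (A k * (A k)ᴴ) 1
        + (∑ i, (a i : ℂ) • kron (A k * pauli i * (A k)ᴴ) 1)
        + (∑ j, (b j : ℂ) • kron (A k * (A k)ᴴ) (pauli j))
        + ∑ i, ∑ j, (T i j : ℂ) • kron (A k * pauli i * (A k)ᴴ) (pauli j)) := by
    intro k
    simp only [blochState, Matrix.mul_smul, Matrix.smul_mul, Matrix.mul_add, Matrix.add_mul,
      Finset.mul_sum, Finset.sum_mul, mul_smul_comm, smul_mul_assoc, key, mul_one]
  rw [Finset.sum_congr rfl fun k _ => expand k]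
  rw [← Finset.smul_sum]
  simp only [Finset.sum_add_distrib]
  have h1 : ∑ k, kron (A k * (A k)ᴴ) (1 : Matrix (Fin 2) (Fin 2) ℂ)
      = kron (1 + ∑ i, (m i : ℂ) • pauli i) 1 := by
    rw [← kron_sum_left, hI]
  have h1' : ∀ Y : Matrix (Fin 2) (Fin 2) ℂ, ∑ k, kron (A k * (A k)ᴴ) Y = kron (1 + ∑ i, (m i : ℂ) • pauli i) Y := by
    intro Y; rw [← kron_sum_left, hI]
  have h2 : ∀ (i : Fin 3) (Y : Matrix (Fin 2) (Fin 2) ℂ),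
      ∑ k, kron (A k * pauli i * (A k)ᴴ) Y = kron ((lam i : ℂ) • pauli i) Y := by
    intro i Y; rw [← kron_sum_left, hP]
  have hA : ∑ k, ∑ i, (a i : ℂ) • kron (A k * pauli i * (A k)ᴴ) (1 : Matrix (Fin 2) (Fin 2) ℂ)
      = ∑ i, (a i : ℂ) • kron ((lam i : ℂ) • pauli i) 1 := by
    rw [Finset.sum_comm]
    exact Finset.sum_congr rfl fun i _ => by rw [← Finset.smul_sum, h2]
  have hB : ∑ k, ∑ j, (b j : ℂ) • kron (A k * (A k)ᴴ) (pauli j)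
      = ∑ j, (b j : ℂ) • kron (1 + ∑ i, (m i : ℂ) • pauli i) (pauli j) := by
    rw [Finset.sum_comm]
    exact Finset.sum_congr rfl fun j _ => by rw [← Finset.smul_sum, h1']
  have hT : ∑ k, ∑ i, ∑ j, (T i j : ℂ) • kron (A k * pauli i * (A k)ᴴ) (pauli j)
      = ∑ i, ∑ j, (T i j : ℂ) • kron ((lam i : ℂ) • pauli i) (pauli j) := by
    rw [Finset.sum_comm]
    refine Finset.sum_congr rfl fun i _ => ?_
    rw [Finset.sum_comm]
    refine Finset.sum_congr rfl fun j _ => ?_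
    rw [← Finset.smul_sum, h2]
  rw [h1, hA, hB, hT]
  simp only [blochState]
  congr 1
  have e1 : kron (1 + ∑ i, (m i : ℂ) • pauli i) (1 : Matrix (Fin 2) (Fin 2) ℂ)
      = kron 1 1 + ∑ i, (m i : ℂ) • kron (pauli i) 1 := by
    rw [kron_add_left, kron_sum_left]
    simp only [kron_smul_left]
  have e2 : ∑ i, (a i : ℂ) • kron ((lam i : ℂ) • pauli i) (1 : Matrix (Fin 2) (Fin 2) ℂ)
      = ∑ i, ((lam i : ℂ) * a i) • kron (pauli i) 1 := by
    refine Finset.sum_congr rfl fun i _ => ?_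
    rw [kron_smul_left, smul_smul, mul_comm]
  have e3 : ∑ j, (b j : ℂ) • kron (1 + ∑ i, (m i : ℂ) • pauli i) (pauli j)
      = ∑ j, (b j : ℂ) • kron 1 (pauli j)
        + ∑ i, ∑ j, ((m i : ℂ) * b j) • kron (pauli i) (pauli j) := by
    have step : ∀ j, (b j : ℂ) • kron (1 + ∑ i, (m i : ℂ) • pauli i) (pauli j)
        = (b j : ℂ) • kron 1 (pauli j)
          + ∑ i, ((m i : ℂ) * b j) • kron (pauli i) (pauli j) := by
      intro j
      rw [kron_add_left, kron_sum_left, smul_add, Finset.smul_sum]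
      congr 1
      exact Finset.sum_congr rfl fun i _ => by rw [kron_smul_left, smul_smul, mul_comm]
    rw [Finset.sum_congr rfl fun j _ => step j, Finset.sum_add_distrib, Finset.sum_comm]
  have e4 : ∑ i, ∑ j, (T i j : ℂ) • kron ((lam i : ℂ) • pauli i) (pauli j)
      = ∑ i, ∑ j, ((lam i : ℂ) * T i j) • kron (pauli i) (pauli j) :=
    Finset.sum_congr rfl fun i _ => Finset.sum_congr rfl fun j _ => by
      rw [kron_smul_left, smul_smul, mul_comm]
  rw [e1, e2, e3, e4]
  simp only [Matrix.of_apply]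
  push_cast
  simp only [add_smul, Finset.sum_add_distrib]
  abel
end
end

section
/- For every real q with 0 < q < 1, the surface integral over the unit sphere satisfies ∫_{S²} √(x₁² + x₂² + q·x₃²) dσ(x) = 2π (√q + arcsin(√(1−q)) / √(1−q)). -/
open MeasureTheory

noncomputable section

/-- The unit sphere `S²` in `ℝ³`. -/
abbrev S2 : Set (EuclideanSpace ℝ (Fin 3)) := Metric.sphere (0 : EuclideanSpace ℝ (Fin 3)) 1

/-- The surface measure `σ` on the unit sphere `S² ⊂ ℝ³`; it is the 2-dimensional
(Hausdorff) surface measure, with total mass `4π`. -/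
def sphereMeasure : Measure (Metric.sphere (0 : EuclideanSpace ℝ (Fin 3)) 1) :=
  (volume : Measure (EuclideanSpace ℝ (Fin 3))).toSphere

/-!
The integrand `N(x) = √(x₁² + x₂² + q x₃²)` is positively homogeneous of degree one, so in polar
coordinates `∫_{S²} N dσ = 4 ∫_{|x| < 1} N dx`. Cutting the ball into horizontal discs at height
`z` and using polar coordinates in each disc, the disc integral is
`(2π/3) ((1 - (1 - q) z²)^{3/2} - q^{3/2} |z|³)`. Integrating over `z ∈ [-1, 1]` after the
substitution `u = √(1 - q) z` produces the `arcsin` term.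
-/

open Set Metric Real

variable {F : Type*} [NormedAddCommGroup F] [NormedSpace ℝ F]

theorem integral_volumeIoiPow (n : ℕ) (g : ℝ → F) :
    ∫ r, g r ∂Measure.volumeIoiPow n = ∫ r in Ioi (0 : ℝ), r ^ n • g r := by
  simp only [Measure.volumeIoiPow, ENNReal.ofReal]
  rw [integral_withDensity_eq_integral_smul (measurable_subtype_coe.pow_const _).real_toNNReal,
    integral_subtype_comap measurableSet_Ioi fun r ↦ Real.toNNReal (r ^ n) • g r]
  refine setIntegral_congr_fun measurableSet_Ioi fun r hr ↦ ?_
  rw [NNReal.smul_def, Real.coe_toNNReal _ (pow_nonneg hr.out.le _)]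

theorem integral_volumeIoiPow_indicator_Iio_one (n : ℕ) :
    ∫ r, (Iio 1).indicator id r.1 ∂Measure.volumeIoiPow n = 1 / (n + 2) := by
  have hpow : ∀ r ∈ Ioi (0 : ℝ),
      r ^ n • (Iio 1).indicator id r = (Iio 1).indicator (· ^ (n + 1)) r := by
    intro r _
    by_cases hr : r ∈ Iio (1 : ℝ) <;> simp [hr, pow_succ]
  rw [integral_volumeIoiPow n ((Iio 1).indicator id),
    setIntegral_congr_fun measurableSet_Ioi hpow, setIntegral_indicator measurableSet_Iio,
    Ioi_inter_Iio, ← integral_Ioc_eq_integral_Ioo, ← intervalIntegral.integral_of_le zero_le_one,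
    integral_pow]
  push_cast
  ring

theorem integral_toSphere_eq_mul_setIntegral_ball {E : Type*} [NormedAddCommGroup E]
    [NormedSpace ℝ E] [MeasurableSpace E] [BorelSpace E] [FiniteDimensional ℝ E] [Nontrivial E]
    (μ : Measure E) [μ.IsAddHaarMeasure] (f : E → ℝ)
    (hf : ∀ r : ℝ, 0 < r → ∀ x, f (r • x) = r * f x) :
    ∫ ω, f ω ∂μ.toSphere = (Module.finrank ℝ E + 1) * ∫ x in ball 0 1, f x ∂μ := by
  set n := Module.finrank ℝ E
  have hn : ((n - 1 : ℕ) : ℝ) + 2 = n + 1 := by rw [Nat.cast_pred Module.finrank_pos]; ring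
  have hpolar : ∫ x in ball 0 1, f x ∂μ
      = ∫ p : sphere (0 : E) 1 × Ioi (0 : ℝ), f p.1 * (Iio 1).indicator id p.2.1
          ∂(μ.toSphere.prod (.volumeIoiPow (n - 1))) := by
    conv_lhs =>
      rw [← integral_indicator measurableSet_ball, ← restrict_compl_singleton (μ := μ) 0,
        ← integral_subtype_comap (measurableSet_singleton 0).compl]
    rw [← μ.measurePreserving_homeomorphUnitSphereProd.integral_comp
      (Homeomorph.measurableEmbedding _)]
    congr 1 with x
    have hx : 0 < ‖(x : E)‖ := norm_pos_iff.2 x.2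
    by_cases h1 : ‖(x : E)‖ < 1
    · simp only [mem_ball, dist_zero_right, h1, indicator_of_mem, mem_Iio, id_eq,
        homeomorphUnitSphereProd_apply_fst_coe, homeomorphUnitSphereProd_apply_snd_coe,
        hf _ (inv_pos.2 hx)]
      field_simp
    · simp [h1]
  rw [hpolar, integral_prod_mul (fun ω : sphere (0 : E) 1 ↦ f ω)
    (fun r : Ioi (0 : ℝ) ↦ (Iio 1).indicator id r.1), integral_volumeIoiPow_indicator_Iio_one, hn]
  field_simp

theorem integral_Ioi_smul_comp_sq (g : ℝ → F) :
    ∫ r in Ioi (0 : ℝ), r • g (r ^ 2) = (2 : ℝ)⁻¹ • ∫ s in Ioi (0 : ℝ), g s := by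
  rw [← integral_comp_rpow_Ioi_of_pos (g := g) two_pos, ← integral_smul]
  refine setIntegral_congr_fun measurableSet_Ioi fun r _ ↦ ?_
  norm_num [smul_smul, ← mul_assoc]

theorem integral_comp_sq_add_sq (g : ℝ → F) :
    ∫ p : ℝ × ℝ, g (p.1 ^ 2 + p.2 ^ 2) = π • ∫ s in Ioi (0 : ℝ), g s := by
  have hpolar : ∀ p : ℝ × ℝ,
      (polarCoord.symm p).1 ^ 2 + (polarCoord.symm p).2 ^ 2 = p.1 ^ 2 := by
    intro p
    simp only [polarCoord_symm_apply]
    linear_combination p.1 ^ 2 * sin_sq_add_cos_sq p.2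
  rw [← integral_comp_polarCoord_symm, polarCoord_target, Measure.volume_eq_prod,
    ← Measure.prod_restrict]
  simp only [hpolar]
  rw [integral_fun_fst (fun r ↦ r • g (r ^ 2)), integral_Ioi_smul_comp_sq, smul_smul,
    measureReal_def, Measure.restrict_apply_univ, Real.volume_Ioo,
    ENNReal.toReal_ofReal (by linarith [pi_pos])]
  ring_nf

theorem integral_euclideanSpace_fin_three_eq_integral_integral
    {f : EuclideanSpace ℝ (Fin 3) → F} (hf : Integrable f) :
    ∫ x, f x = ∫ z, ∫ p : ℝ × ℝ, f !₂[p.1, p.2, z] := by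
  let e : ℝ × ℝ × ℝ ≃ᵐ EuclideanSpace ℝ (Fin 3) :=
    ((MeasurableEquiv.refl ℝ).prodCongr MeasurableEquiv.finTwoArrow.symm).trans
      ((MeasurableEquiv.piFinSuccAbove (fun _ ↦ ℝ) 2).symm.trans (MeasurableEquiv.toLp 2 _))
  have he : MeasurePreserving e :=
    (PiLp.volume_preserving_toLp _).comp <|
      (volume_preserving_piFinSuccAbove (fun _ ↦ ℝ) 2).symm.comp
        ((MeasurePreserving.id volume).prod (volume_preserving_finTwoArrow ℝ).symm)
  have he_apply : ∀ u : ℝ × ℝ × ℝ, e u = !₂[u.2.1, u.2.2, u.1] := by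
    intro u
    ext i
    fin_cases i <;> rfl
  rw [← he.integral_comp' f, Measure.volume_eq_prod, integral_prod]
  · simp only [he_apply]
  · rw [← Measure.volume_eq_prod]
    exact he.integrable_comp_emb e.measurableEmbedding |>.2 hf

theorem HasDerivAt.mul_sqrt_self {f : ℝ → ℝ} {f' x : ℝ} (hf : HasDerivAt f f' x)
    (hx : 0 < f x) : HasDerivAt (fun y ↦ f y * √(f y)) (3 / 2 * f' * √(f x)) x := by
  refine (hf.mul (hf.sqrt hx.ne')).congr_deriv ?_
  have := sqrt_pos.2 hx
  field_simp
  rw [sq_sqrt hx.le]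
  ring

theorem integral_sqrt_add {a c : ℝ} (ha : 0 ≤ a) (hc : 0 ≤ c) :
    ∫ s in (0 : ℝ)..a, √(s + c) = 2 / 3 * ((a + c) * √(a + c) - c * √c) := by
  rw [intervalIntegral.integral_eq_sub_of_hasDerivAt_of_le ha
    (f := fun s ↦ 2 / 3 * ((s + c) * √(s + c))) (by fun_prop) (fun s hs ↦ ?_)
    ((by fun_prop : Continuous fun s ↦ √(s + c)).intervalIntegrable _ _)]
  · simp only [zero_add]
    ring
  · refine ((((hasDerivAt_id' s).add_const c).mul_sqrt_self (by linarith [hs.1])).const_mul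
      (2 / 3)).congr_deriv ?_
    ring

theorem hasDerivAt_primitive_one_sub_sq_mul_sqrt {u : ℝ} (hu : u ∈ Ioo (-1) 1) :
    HasDerivAt
      (fun u ↦ u * ((1 - u ^ 2) * √(1 - u ^ 2)) / 4 + 3 / 8 * (u * √(1 - u ^ 2) + arcsin u))
      ((1 - u ^ 2) * √(1 - u ^ 2)) u := by
  have hpos : 0 < 1 - u ^ 2 := by nlinarith [hu.1, hu.2]
  have hsq : HasDerivAt (fun u : ℝ ↦ 1 - u ^ 2) (-(2 * u)) u := by
    simpa using (hasDerivAt_pow 2 u).const_sub 1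
  have harc := hasDerivAt_arcsin (by linarith [hu.1] : u ≠ -1) (by linarith [hu.2] : u ≠ 1)
  refine ((((hasDerivAt_id' u).mul (hsq.mul_sqrt_self hpos)).div_const 4).add
    (((hasDerivAt_id' u).mul (hsq.sqrt hpos.ne')).add harc |>.const_mul (3 / 8))).congr_deriv ?_
  have hs0 : √(1 - u ^ 2) ≠ 0 := (sqrt_pos.2 hpos).ne'
  field_simp
  rw [sq_sqrt hpos.le]
  ring

theorem integral_one_sub_sq_mul_sqrt {b : ℝ} (hb0 : 0 ≤ b) (hb1 : b ≤ 1) :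
    ∫ u in -b..b, (1 - u ^ 2) * √(1 - u ^ 2)
      = b * ((1 - b ^ 2) * √(1 - b ^ 2)) / 2 + 3 / 4 * (b * √(1 - b ^ 2) + arcsin b) := by
  rw [intervalIntegral.integral_eq_sub_of_hasDerivAt_of_le (by linarith) (by fun_prop)
    (fun u hu ↦ hasDerivAt_primitive_one_sub_sq_mul_sqrt ⟨by linarith [hu.1], by linarith [hu.2]⟩)
    ((by fun_prop : Continuous fun u : ℝ ↦ (1 - u ^ 2) * √(1 - u ^ 2)).intervalIntegrable _ _)]
  simp only [neg_sq, arcsin_neg]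
  ring

theorem integral_abs_pow_three : ∫ z in (-1 : ℝ)..1, |z| ^ 3 = 1 / 2 := by
  have hcont : Continuous fun z : ℝ ↦ |z| ^ 3 := by fun_prop
  have hneg : ∫ z in (-1 : ℝ)..0, |z| ^ 3 = ∫ z in (-1 : ℝ)..0, -z ^ 3 :=
    intervalIntegral.integral_congr fun z hz ↦ by
      rw [uIcc_of_le (by norm_num)] at hz
      simp [abs_of_nonpos hz.2, Odd.neg_pow (by decide : Odd 3)]
  have hpos : ∫ z in (0 : ℝ)..1, |z| ^ 3 = ∫ z in (0 : ℝ)..1, z ^ 3 :=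
    intervalIntegral.integral_congr fun z hz ↦ by
      rw [uIcc_of_le (by norm_num)] at hz
      simp [abs_of_nonneg hz.1]
  rw [← intervalIntegral.integral_add_adjacent_intervals (b := 0) (hcont.intervalIntegrable _ _)
    (hcont.intervalIntegrable _ _), hneg, hpos, intervalIntegral.integral_neg, integral_pow,
    integral_pow]
  norm_num

def oblateNorm (q : ℝ) (x : EuclideanSpace ℝ (Fin 3)) : ℝ :=
  √(x 0 ^ 2 + x 1 ^ 2 + q * x 2 ^ 2)

/-- `π * oblateSlice q z` is the integral of `oblateNorm q` over the disc `x₁² + x₂² < 1 - z²`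
at height `z` in the unit ball. -/
def oblateSlice (q z : ℝ) : ℝ :=
  2 / 3 * ((1 - (1 - q) * z ^ 2) * √(1 - (1 - q) * z ^ 2) - q * √q * |z| ^ 3)

theorem oblateNorm_smul (q : ℝ) {r : ℝ} (hr : 0 < r) (x : EuclideanSpace ℝ (Fin 3)) :
    oblateNorm q (r • x) = r * oblateNorm q x := by
  simp only [oblateNorm, PiLp.smul_apply, smul_eq_mul]
  conv_rhs => rw [← sqrt_sq hr.le, ← sqrt_mul (sq_nonneg r)]
  ring_nf

theorem continuous_oblateNorm (q : ℝ) : Continuous (oblateNorm q) := by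
  unfold oblateNorm
  fun_prop

theorem setIntegral_Ioi_indicator_sqrt {q : ℝ} (hq : 0 ≤ q) (z : ℝ) :
    ∫ s in Ioi 0, (Iio (1 - z ^ 2)).indicator (fun s ↦ √(s + q * z ^ 2)) s
      = (Icc (-1) 1).indicator (oblateSlice q) z := by
  rw [setIntegral_indicator measurableSet_Iio, Ioi_inter_Iio]
  by_cases hz : z ∈ Icc (-1) 1
  · have hz2 : 0 ≤ 1 - z ^ 2 := by nlinarith [hz.1, hz.2]
    have hsqrt : √(q * z ^ 2) = √q * |z| := by rw [sqrt_mul hq, sqrt_sq_eq_abs]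
    rw [indicator_of_mem hz, ← integral_Ioc_eq_integral_Ioo,
      ← intervalIntegral.integral_of_le hz2, integral_sqrt_add hz2 (by positivity), hsqrt,
      oblateSlice, ← sq_abs z]
    ring_nf
  · have hz2 : 1 - z ^ 2 ≤ 0 := by
      rw [mem_Icc, not_and_or, not_le, not_le] at hz
      rcases hz with hz | hz <;> nlinarith
    rw [indicator_of_notMem hz, Ioo_eq_empty (by linarith), Measure.restrict_empty,
      integral_zero_measure]

theorem integral_indicator_ball_oblateNorm_slice {q : ℝ} (hq : 0 ≤ q) (z : ℝ) :
    ∫ p : ℝ × ℝ, (ball 0 1).indicator (oblateNorm q) !₂[p.1, p.2, z]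
      = π * (Icc (-1) 1).indicator (oblateSlice q) z := by
  rw [← setIntegral_Ioi_indicator_sqrt hq, ← smul_eq_mul, ← integral_comp_sq_add_sq]
  congr 1 with p
  have hball : !₂[p.1, p.2, z] ∈ ball (0 : EuclideanSpace ℝ (Fin 3)) 1
      ↔ p.1 ^ 2 + p.2 ^ 2 < 1 - z ^ 2 := by
    rw [mem_ball_zero_iff, ← sq_lt_one_iff₀ (norm_nonneg _), lt_sub_iff_add_lt]
    simp [EuclideanSpace.norm_sq_eq, Fin.sum_univ_three]
  simp only [indicator, hball, mem_Iio, oblateNorm]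
  congr 2

theorem integral_oblateSlice {q : ℝ} (hq0 : 0 < q) (hq1 : q < 1) :
    ∫ z in (-1 : ℝ)..1, oblateSlice q z = (√q + arcsin √(1 - q) / √(1 - q)) / 2 := by
  set b := √(1 - q)
  have hb0 : 0 < b := sqrt_pos.2 (by linarith)
  have hb2 : b ^ 2 = 1 - q := sq_sqrt (by linarith)
  have hb1 : b ≤ 1 := by nlinarith
  have hscale : ∫ z in (-1 : ℝ)..1, (1 - (1 - q) * z ^ 2) * √(1 - (1 - q) * z ^ 2)
      = b⁻¹ * ∫ u in -b..b, (1 - u ^ 2) * √(1 - u ^ 2) := by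
    simp_rw [← hb2, ← mul_pow]
    rw [intervalIntegral.integral_comp_mul_left (fun u ↦ (1 - u ^ 2) * √(1 - u ^ 2)) hb0.ne',
      mul_neg_one, mul_one, smul_eq_mul]
  have hq : 1 - b ^ 2 = q := by linarith
  unfold oblateSlice
  rw [intervalIntegral.integral_const_mul, intervalIntegral.integral_sub, hscale,
    integral_one_sub_sq_mul_sqrt hb0.le hb1, intervalIntegral.integral_const_mul,
    integral_abs_pow_three, hq]
  · field_simp
    ring
  all_goals exact Continuous.intervalIntegrable (by fun_prop) _ _

theorem setIntegral_ball_oblateNorm {q : ℝ} (hq0 : 0 < q) (hq1 : q < 1) :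
    ∫ x in ball 0 1, oblateNorm q x = π / 2 * (√q + arcsin √(1 - q) / √(1 - q)) := by
  have hint : Integrable ((ball (0 : EuclideanSpace ℝ (Fin 3)) 1).indicator (oblateNorm q)) :=
    (((continuous_oblateNorm q).continuousOn.integrableOn_compact
      (isCompact_closedBall 0 1)).mono_set ball_subset_closedBall).integrable_indicator
        measurableSet_ball
  rw [← integral_indicator measurableSet_ball,
    integral_euclideanSpace_fin_three_eq_integral_integral hint]
  simp_rw [integral_indicator_ball_oblateNorm_slice hq0.le]
  rw [integral_const_mul, integral_indicator measurableSet_Icc, integral_Icc_eq_integral_Ioc,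
    ← intervalIntegral.integral_of_le (by norm_num), integral_oblateSlice hq0 hq1]
  ring

/-- For `0 < q < 1`, `∫_{S²} √(x₁² + x₂² + q x₃²) dσ(x)
    = 2π (√q + arcsin(√(1−q)) / √(1−q))`. -/
theorem sphere_integral_oblate (q : ℝ) (hq0 : 0 < q) (hq1 : q < 1) :
    (∫ x : Metric.sphere (0 : EuclideanSpace ℝ (Fin 3)) 1,
        Real.sqrt ((x : EuclideanSpace ℝ (Fin 3)) 0 ^ 2 +
          (x : EuclideanSpace ℝ (Fin 3)) 1 ^ 2 +
          q * (x : EuclideanSpace ℝ (Fin 3)) 2 ^ 2) ∂sphereMeasure) =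
      2 * Real.pi *
        (Real.sqrt q + Real.arcsin (Real.sqrt (1 - q)) / Real.sqrt (1 - q)) := by
  have hsphere := integral_toSphere_eq_mul_setIntegral_ball volume (oblateNorm q)
    fun _ hr ↦ oblateNorm_smul q hr
  rw [finrank_euclideanSpace_fin, setIntegral_ball_oblateNorm hq0 hq1] at hsphere
  refine hsphere.trans ?_
  push_cast
  ring
end
end

section
/- For every real a with 0 < a < 1, the surface integral appearing in the displaced-Werner non-steerability boundary evaluates to (1/2π) ∫_{S²} √((x₁² + x₂²)/(1−a) + x₃²/(1−a)²) dσ(x) = 1/(1−a) + arcsinh(√(a/(1−a))) / √a. Consequently, the boundary correlation strength ξ(a) := [1/(1−a) + arcsinh(√(a/(1−a)))/√a]^{-1} is the unique ξ > 0 satisfying (ξ/2π) ∫_{S²} √((x₁² + x₂²)/(1−a) + x₃²/(1−a)²) dσ(x) = 1. -/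
open MeasureTheory

noncomputable section

/-! The integrand `f` is positively homogeneous of degree one, so integrating `f x * exp (-‖x‖)`
over `ℝ³` in polar coordinates gives `3! * ∫_{S²} f dσ`. Since `f` depends only on the distance
to the `x₃`-axis and on `x₃`, the same integral can be computed in spherical coordinates about
that axis; with `b = 1 - a` it equals `2π * 3! * ∫₀^π sin θ * √(b + a cos² θ) / b dθ`, and the
substitution `t = cos θ` leaves the elementary integral
`∫_{-1}^{1} √(b + a t²) dt = 1 + b * arsinh (√(a / b)) / √a`. -/

open Real Set Metric Module

theorem integral_pow_mul_exp_neg_Ioi (n : ℕ) :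
    ∫ x in Ioi (0 : ℝ), x ^ n * exp (-x) = n.factorial := by
  rw [← Real.Gamma_nat_eq_factorial, Real.Gamma_eq_integral (by positivity)]
  refine setIntegral_congr_fun measurableSet_Ioi fun x _ => ?_
  simp only [add_sub_cancel_right, Real.rpow_natCast]
  ring

theorem integrableOn_pow_mul_exp_neg_Ioi (n : ℕ) :
    IntegrableOn (fun x : ℝ => x ^ n * exp (-x)) (Ioi 0) := by
  refine (Real.GammaIntegral_convergent (s := n + 1) (by positivity)).congr_fun
    (fun x _ => ?_) measurableSet_Ioi
  simp only [add_sub_cancel_right, Real.rpow_natCast]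
  ring

section Homogeneous

variable {E : Type*} [NormedAddCommGroup E] [NormedSpace ℝ E] [FiniteDimensional ℝ E]
  [MeasurableSpace E] [BorelSpace E] [Nontrivial E] (μ : Measure E) [μ.IsAddHaarMeasure]

theorem integrable_norm_pow_mul_exp_neg_norm (n : ℕ) :
    Integrable (fun x : E => ‖x‖ ^ n * exp (-‖x‖)) μ := by
  rw [integrable_fun_norm_addHaar μ (f := fun y => y ^ n * exp (-y))]
  refine (integrableOn_pow_mul_exp_neg_Ioi (finrank ℝ E - 1 + n)).congr_fun
    (fun y _ => ?_) measurableSet_Ioi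
  dsimp only
  rw [smul_eq_mul, pow_add]
  ring

theorem integral_mul_exp_neg_norm_of_homogeneous {f : E → ℝ}
    (hf : ∀ r : ℝ, 0 < r → ∀ x, f (r • x) = r * f x) :
    ∫ x, f x * exp (-‖x‖) ∂μ =
      (finrank ℝ E).factorial * ∫ ω : sphere (0 : E) 1, f ω ∂μ.toSphere := by
  obtain ⟨d, hd⟩ : ∃ d, finrank ℝ E = d + 1 := Nat.exists_eq_add_one.2 finrank_pos
  have hμ := μ.measurePreserving_homeomorphUnitSphereProd
  rw [hd, Nat.add_sub_cancel] at hμ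
  calc ∫ x, f x * exp (-‖x‖) ∂μ
      = ∫ x : ({0}ᶜ : Set E), f x * exp (-‖(x : E)‖) ∂μ.comap (↑) := by
        rw [integral_subtype_comap (measurableSet_singleton _).compl (fun x => f x * exp (-‖x‖)),
          restrict_compl_singleton]
    _ = ∫ p : sphere (0 : E) 1 × Ioi (0 : ℝ), f p.1 * ((p.2 : ℝ) * exp (-(p.2 : ℝ)))
          ∂μ.toSphere.prod (.volumeIoiPow d) := by
        rw [← hμ.integral_comp (Homeomorph.measurableEmbedding _)]
        refine integral_congr_ae (.of_forall fun x => ?_)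
        have hx : 0 < ‖(x : E)‖ := norm_pos_iff.2 x.2
        simp only [homeomorphUnitSphereProd_apply_fst_coe, homeomorphUnitSphereProd_apply_snd_coe]
        rw [← mul_assoc, mul_comm (f (_ • _)), ← hf _ hx, smul_inv_smul₀ hx.ne']
    _ = (∫ ω : sphere (0 : E) 1, f ω ∂μ.toSphere) *
          ∫ r : Ioi (0 : ℝ), (r : ℝ) * exp (-(r : ℝ)) ∂.volumeIoiPow d :=
        integral_prod_mul (f := fun ω : sphere (0 : E) 1 => f ω)
          (g := fun r : Ioi (0 : ℝ) => (r : ℝ) * exp (-(r : ℝ)))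
    _ = _ := by
        rw [mul_comm, hd, ← integral_pow_mul_exp_neg_Ioi]
        simp only [Measure.volumeIoiPow, ENNReal.ofReal]
        rw [integral_withDensity_eq_integral_smul
            (measurable_subtype_coe.pow_const _).real_toNNReal,
          integral_subtype_comap measurableSet_Ioi
            (fun r : ℝ => (r ^ d).toNNReal • (r * exp (-r)))]
        refine congrArg (· * _) (setIntegral_congr_fun measurableSet_Ioi fun r (hr : 0 < r) => ?_)
        rw [NNReal.smul_def, Real.coe_toNNReal _ (by positivity), smul_eq_mul, pow_succ]
        ring

end Homogeneous

section Planar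

variable {F : Type*} [NormedAddCommGroup F] [NormedSpace ℝ F]

theorem integral_comp_sqrt_sq_add_sq (g : ℝ → F) :
    ∫ v : ℝ × ℝ, g √(v.1 ^ 2 + v.2 ^ 2) = (2 * π) • ∫ r in Ioi 0, r • g r := by
  rw [← integral_comp_polarCoord_symm, polarCoord_target, Measure.volume_eq_prod,
    ← Measure.prod_restrict]
  have hpolar : ∀ p : ℝ × ℝ, p.1 • g √((polarCoord.symm p).1 ^ 2 + (polarCoord.symm p).2 ^ 2)
      = p.1 • g |p.1| := by
    rintro ⟨s, θ⟩
    rw [polarCoord_symm_apply, ← sqrt_sq_eq_abs]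
    congr 3
    linear_combination s ^ 2 * sin_sq_add_cos_sq θ
  simp_rw [hpolar]
  rw [integral_fun_fst (fun s : ℝ => s • g |s|), measureReal_restrict_apply_univ, volume_real_Ioo,
    setIntegral_congr_fun measurableSet_Ioi fun s (hs : 0 < s) => by rw [abs_of_pos hs]]
  rw [max_eq_left (by linarith [pi_pos])]
  congr 1
  ring

theorem setIntegral_upperHalfPlane_eq_polarCoord (Φ : ℝ × ℝ → F) :
    ∫ q in univ ×ˢ Ioi 0, Φ q = ∫ p in Ioi 0 ×ˢ Ioo 0 π, p.1 • Φ (polarCoord.symm p) := by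
  have hupper : ∀ p ∈ polarCoord.target,
      polarCoord.symm p ∈ univ ×ˢ Ioi (0 : ℝ) ↔ p ∈ Ioi 0 ×ˢ Ioo 0 π := by
    rintro ⟨s, θ⟩ ⟨hs, hθ⟩
    simp only [polarCoord_symm_apply, mem_prod, mem_univ, mem_Ioi, true_and, mem_Ioo] at hs hθ ⊢
    refine ⟨fun h => ⟨hs, ?_, ?_⟩, fun h => mul_pos hs (sin_pos_of_pos_of_lt_pi h.2.1 h.2.2)⟩
    · by_contra! hθ0
      exact ((mul_pos_iff_of_pos_left hs).1 h).not_ge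
        (sin_nonpos_of_nonpos_of_neg_pi_le hθ0 hθ.1.le)
    · exact hθ.2
  rw [← integral_indicator (MeasurableSet.univ.prod measurableSet_Ioi),
    ← integral_comp_polarCoord_symm]
  have hsub : Ioi 0 ×ˢ Ioo 0 π ⊆ polarCoord.target :=
    prod_mono le_rfl (Ioo_subset_Ioo_left (by linarith [pi_pos]))
  calc ∫ p in polarCoord.target, p.1 • (univ ×ˢ Ioi 0).indicator Φ (polarCoord.symm p)
      = ∫ p in polarCoord.target, (Ioi 0 ×ˢ Ioo 0 π).indicator
          (fun p => p.1 • Φ (polarCoord.symm p)) p :=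
        setIntegral_congr_fun polarCoord.open_target.measurableSet fun p hp => by
          simp only [indicator_apply, hupper p hp]
          split_ifs <;> simp
    _ = _ := by
        rw [setIntegral_indicator (measurableSet_Ioi.prod measurableSet_Ioo),
          inter_eq_right.2 hsub]

end Planar

theorem integral_sin_mul_comp_cos {g : ℝ → ℝ} (hg : Continuous g) :
    ∫ θ in 0..π, sin θ * g (cos θ) = ∫ t in -1..1, g t := by
  have h := intervalIntegral.integral_comp_mul_deriv (a := 0) (b := π) (f := cos)
    (f' := fun θ => -sin θ) (fun θ _ => hasDerivAt_cos θ) (by fun_prop) hg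
  simp only [cos_zero, cos_pi, Function.comp_def, mul_neg, intervalIntegral.integral_neg] at h
  rw [intervalIntegral.integral_symm 1 (-1), ← h, neg_neg]
  simp only [mul_comm]

theorem hasDerivAt_antideriv_sqrt_add_mul_sq {a b : ℝ} (ha : 0 < a) (hb : 0 < b) (t : ℝ) :
    HasDerivAt (fun t => t * √(b + a * t ^ 2) / 2 + b / (2 * √a) * arsinh (√a / √b * t))
      √(b + a * t ^ 2) t := by
  have hpos : 0 < b + a * t ^ 2 := by positivity
  have hsqrt := (((hasDerivAt_pow 2 t).const_mul a).const_add b).sqrt hpos.ne'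
  have harsinh := (((hasDerivAt_id t).const_mul (√a / √b)).arsinh).const_mul (b / (2 * √a))
  refine ((((hasDerivAt_id t).mul hsqrt).div_const 2).add harsinh).congr_deriv ?_
  simp only [id, smul_eq_mul, mul_one, Nat.cast_ofNat]
  have h1 : 1 + (√a / √b * t) ^ 2 = (b + a * t ^ 2) / b := by
    field_simp
    rw [sq_sqrt ha.le, sq_sqrt hb.le]
    ring
  rw [h1, sqrt_div hpos.le]
  field_simp
  rw [sq_sqrt hpos.le]
  ring

theorem integral_sqrt_add_mul_sq {a b : ℝ} (ha : 0 < a) (hb : 0 < b) :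
    ∫ t in -1..1, √(b + a * t ^ 2) = √(b + a) + b / √a * arsinh (√a / √b) := by
  rw [intervalIntegral.integral_eq_sub_of_hasDerivAt
    (fun t _ => hasDerivAt_antideriv_sqrt_add_mul_sq ha hb t)
    ((by fun_prop : Continuous fun t => √(b + a * t ^ 2)).intervalIntegrable _ _)]
  simp only [mul_neg, mul_one, arsinh_neg, one_pow, neg_one_sq]
  ring

local notation "ℝ³" => EuclideanSpace ℝ (Fin 3)

def finThreeAxisEquiv : ℝ³ ≃ᵐ ℝ × ℝ × ℝ :=
  (MeasurableEquiv.toLp 2 (Fin 3 → ℝ)).symm.trans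
    ((MeasurableEquiv.piFinSuccAbove (fun _ => ℝ) 2).trans
      ((MeasurableEquiv.refl ℝ).prodCongr MeasurableEquiv.finTwoArrow))

theorem finThreeAxisEquiv_apply (x : ℝ³) : finThreeAxisEquiv x = (x 2, x 0, x 1) := rfl

theorem measurePreserving_finThreeAxisEquiv : MeasurePreserving finThreeAxisEquiv :=
  (((MeasurePreserving.id volume).prod (volume_preserving_finTwoArrow ℝ)).comp
    (volume_preserving_piFinSuccAbove (fun _ : Fin 3 => ℝ) 2)).comp
      (EuclideanSpace.volume_preserving_symm_measurableEquiv_toLp (Fin 3))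

theorem integral_eq_two_pi_mul_integral_cylindrical (Ψ : ℝ → ℝ → ℝ)
    (hΨ : Integrable fun x : ℝ³ => Ψ √(x 0 ^ 2 + x 1 ^ 2) (x 2)) :
    ∫ x : ℝ³, Ψ √(x 0 ^ 2 + x 1 ^ 2) (x 2) = 2 * π * ∫ z, ∫ r in Ioi 0, r * Ψ r z := by
  set G : ℝ × ℝ × ℝ → ℝ := fun p => Ψ √(p.2.1 ^ 2 + p.2.2 ^ 2) p.1
  have hG : Integrable G := by
    rwa [← measurePreserving_finThreeAxisEquiv.integrable_comp_emb
      finThreeAxisEquiv.measurableEmbedding]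
  calc ∫ x : ℝ³, Ψ √(x 0 ^ 2 + x 1 ^ 2) (x 2)
      = ∫ p, G p := measurePreserving_finThreeAxisEquiv.integral_comp
        finThreeAxisEquiv.measurableEmbedding G
    _ = ∫ z, ∫ v : ℝ × ℝ, Ψ √(v.1 ^ 2 + v.2 ^ 2) z := by
        rw [Measure.volume_eq_prod] at hG ⊢
        exact integral_prod G hG
    _ = ∫ z, 2 * π * ∫ r in Ioi 0, r * Ψ r z := by
        congr 1 with z
        exact integral_comp_sqrt_sq_add_sq (Ψ · z)
    _ = _ := integral_const_mul _ _

theorem integral_eq_two_pi_mul_integral_spherical (Ψ : ℝ → ℝ → ℝ)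
    (hΨ : Integrable fun x : ℝ³ => Ψ √(x 0 ^ 2 + x 1 ^ 2) (x 2))
    (hΨ_half : IntegrableOn (fun q : ℝ × ℝ => q.2 * Ψ q.2 q.1) (univ ×ˢ Ioi 0)) :
    ∫ x : ℝ³, Ψ √(x 0 ^ 2 + x 1 ^ 2) (x 2) =
      2 * π * ∫ p in Ioi 0 ×ˢ Ioo 0 π, p.1 ^ 2 * sin p.2 * Ψ (p.1 * sin p.2) (p.1 * cos p.2) := by
  rw [Measure.volume_eq_prod] at hΨ_half
  rw [integral_eq_two_pi_mul_integral_cylindrical Ψ hΨ, ← setIntegral_univ,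
    ← setIntegral_prod _ hΨ_half, ← Measure.volume_eq_prod,
    setIntegral_upperHalfPlane_eq_polarCoord]
  congr 1
  refine setIntegral_congr_fun (measurableSet_Ioi.prod measurableSet_Ioo) fun p _ => ?_
  rw [polarCoord_symm_apply, smul_eq_mul]
  ring

def boundaryIntegrand (b : ℝ) (x : ℝ³) : ℝ := √((x 0 ^ 2 + x 1 ^ 2) / b + x 2 ^ 2 / b ^ 2)

def scaledNorm (b ρ z : ℝ) : ℝ := √(ρ ^ 2 / b + z ^ 2 / b ^ 2)

theorem EuclideanSpace.norm_fin_three (x : ℝ³) : ‖x‖ = √(x 0 ^ 2 + x 1 ^ 2 + x 2 ^ 2) := by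
  simp [EuclideanSpace.norm_eq, Fin.sum_univ_three, sq_abs]

theorem boundaryIntegrand_eq_scaledNorm (b : ℝ) (x : ℝ³) :
    boundaryIntegrand b x = scaledNorm b √(x 0 ^ 2 + x 1 ^ 2) (x 2) := by
  rw [boundaryIntegrand, scaledNorm, sq_sqrt (by positivity)]

theorem boundaryIntegrand_smul (b : ℝ) {r : ℝ} (hr : 0 ≤ r) (x : ℝ³) :
    boundaryIntegrand b (r • x) = r * boundaryIntegrand b x := by
  have hsqrt : ∀ c, √(r ^ 2 * c) = r * √c := fun c => by rw [sqrt_mul (sq_nonneg r), sqrt_sq hr]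
  simp only [boundaryIntegrand, PiLp.smul_apply, smul_eq_mul, ← hsqrt]
  ring_nf

theorem scaledNorm_le {b : ℝ} (hb : 0 < b) (hb1 : b ≤ 1) (ρ z : ℝ) :
    scaledNorm b ρ z ≤ √(ρ ^ 2 + z ^ 2) / b := by
  have hρ : ρ ^ 2 / b ≤ ρ ^ 2 / b ^ 2 :=
    div_le_div_of_nonneg_left (sq_nonneg ρ) (by positivity) (by nlinarith)
  calc scaledNorm b ρ z ≤ √((ρ ^ 2 + z ^ 2) / b ^ 2) := sqrt_le_sqrt (by rw [add_div]; linarith)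
    _ = √(ρ ^ 2 + z ^ 2) / b := by rw [sqrt_div (by positivity), sqrt_sq hb.le]

theorem scaledNorm_polar {b : ℝ} (hb : 0 < b) {s : ℝ} (hs : 0 ≤ s) (θ : ℝ) :
    scaledNorm b (s * sin θ) (s * cos θ) = s * (√(b + (1 - b) * cos θ ^ 2) / b) := by
  have hsin : sin θ ^ 2 = 1 - cos θ ^ 2 := by linear_combination sin_sq_add_cos_sq θ
  have hsq : (s * sin θ) ^ 2 / b + (s * cos θ) ^ 2 / b ^ 2 =
      (s / b) ^ 2 * (b + (1 - b) * cos θ ^ 2) := by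
    field_simp
    rw [hsin]; ring
  rw [scaledNorm, hsq, sqrt_mul (sq_nonneg _), sqrt_sq (by positivity)]
  ring

theorem integrable_boundaryIntegrand_mul_exp_neg_norm {b : ℝ} (hb : 0 < b) (hb1 : b ≤ 1) :
    Integrable fun x : ℝ³ => boundaryIntegrand b x * exp (-‖x‖) := by
  have hcont : Continuous fun x : ℝ³ => boundaryIntegrand b x * exp (-‖x‖) := by
    unfold boundaryIntegrand; fun_prop
  refine ((integrable_norm_pow_mul_exp_neg_norm volume 1).const_mul b⁻¹).mono'
    hcont.aestronglyMeasurable (.of_forall fun x => ?_)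
  have h := scaledNorm_le hb hb1 √(x 0 ^ 2 + x 1 ^ 2) (x 2)
  rw [← boundaryIntegrand_eq_scaledNorm, sq_sqrt (by positivity),
    ← EuclideanSpace.norm_fin_three] at h
  rw [norm_of_nonneg (by unfold boundaryIntegrand; positivity), pow_one]
  calc boundaryIntegrand b x * exp (-‖x‖) ≤ ‖x‖ / b * exp (-‖x‖) :=
        mul_le_mul_of_nonneg_right h (exp_pos _).le
    _ = b⁻¹ * (‖x‖ * exp (-‖x‖)) := by ring

theorem integrable_mul_scaledNorm_mul_exp {b : ℝ} (hb : 0 < b) (hb1 : b ≤ 1) :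
    Integrable fun q : ℝ × ℝ => q.2 * (scaledNorm b q.2 q.1 * exp (-√(q.2 ^ 2 + q.1 ^ 2))) := by
  have hcont : Continuous fun q : ℝ × ℝ =>
      q.2 * (scaledNorm b q.2 q.1 * exp (-√(q.2 ^ 2 + q.1 ^ 2))) := by
    unfold scaledNorm; fun_prop
  refine ((integrable_norm_pow_mul_exp_neg_norm volume 2).const_mul (2 / b)).mono'
    hcont.aestronglyMeasurable (.of_forall fun q => ?_)
  have h1 : |q.1| ≤ ‖q‖ := by rw [Prod.norm_def, ← Real.norm_eq_abs]; exact le_max_left _ _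
  have h2 : |q.2| ≤ ‖q‖ := by rw [Prod.norm_def, ← Real.norm_eq_abs]; exact le_max_right _ _
  -- `‖q‖` is the sup norm of `ℝ × ℝ`, within a factor `2` of the Euclidean one
  have hlow : ‖q‖ ≤ √(q.2 ^ 2 + q.1 ^ 2) := by
    rw [Prod.norm_def, Real.norm_eq_abs, Real.norm_eq_abs]
    exact max_le (abs_le_sqrt (by nlinarith)) (abs_le_sqrt (by nlinarith))
  have hup : √(q.2 ^ 2 + q.1 ^ 2) ≤ 2 * ‖q‖ := by
    rw [sqrt_le_iff]
    exact ⟨by positivity, by nlinarith [sq_abs q.1, sq_abs q.2, abs_nonneg q.1, abs_nonneg q.2]⟩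
  rw [norm_mul, Real.norm_eq_abs,
    norm_of_nonneg (by unfold scaledNorm; positivity)]
  calc |q.2| * (scaledNorm b q.2 q.1 * exp (-√(q.2 ^ 2 + q.1 ^ 2)))
      ≤ ‖q‖ * (2 * ‖q‖ / b * exp (-‖q‖)) := by
        gcongr
        · unfold scaledNorm; positivity
        · exact (scaledNorm_le hb hb1 _ _).trans (by gcongr)
    _ = 2 / b * (‖q‖ ^ 2 * exp (-‖q‖)) := by ring

theorem integral_boundaryIntegrand_mul_exp_neg_norm {b : ℝ} (hb : 0 < b) (hb1 : b ≤ 1) :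
    ∫ x : ℝ³, boundaryIntegrand b x * exp (-‖x‖) =
      2 * π * (Nat.factorial 3 * ∫ θ in 0..π, sin θ * (√(b + (1 - b) * cos θ ^ 2) / b)) := by
  set Ψ : ℝ → ℝ → ℝ := fun ρ z => scaledNorm b ρ z * exp (-√(ρ ^ 2 + z ^ 2))
  have hΨ : ∀ x : ℝ³, boundaryIntegrand b x * exp (-‖x‖) = Ψ √(x 0 ^ 2 + x 1 ^ 2) (x 2) :=
    fun x => by
      simp only [Ψ]
      rw [boundaryIntegrand_eq_scaledNorm, EuclideanSpace.norm_fin_three, sq_sqrt (by positivity)]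
  have h3 := integrable_boundaryIntegrand_mul_exp_neg_norm hb hb1
  simp only [hΨ] at h3 ⊢
  rw [integral_eq_two_pi_mul_integral_spherical Ψ h3
    (integrable_mul_scaledNorm_mul_exp hb hb1).integrableOn]
  congr 1
  calc ∫ p in Ioi 0 ×ˢ Ioo 0 π, p.1 ^ 2 * sin p.2 * Ψ (p.1 * sin p.2) (p.1 * cos p.2)
      = ∫ p in Ioi 0 ×ˢ Ioo 0 π,
          p.1 ^ 3 * exp (-p.1) * (sin p.2 * (√(b + (1 - b) * cos p.2 ^ 2) / b)) := by
        refine setIntegral_congr_fun (measurableSet_Ioi.prod measurableSet_Ioo) fun p hp => ?_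
        have hs : 0 ≤ p.1 := le_of_lt hp.1
        have hnorm : (p.1 * sin p.2) ^ 2 + (p.1 * cos p.2) ^ 2 = p.1 ^ 2 := by
          linear_combination p.1 ^ 2 * sin_sq_add_cos_sq p.2
        simp only [Ψ]
        rw [scaledNorm_polar hb hs, hnorm, sqrt_sq hs]
        ring
    _ = (∫ s in Ioi 0, s ^ 3 * exp (-s)) *
          ∫ θ in Ioo 0 π, sin θ * (√(b + (1 - b) * cos θ ^ 2) / b) := by
        rw [Measure.volume_eq_prod, ← Measure.prod_restrict]
        exact integral_prod_mul (fun s : ℝ => s ^ 3 * exp (-s))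
          (fun θ => sin θ * (√(b + (1 - b) * cos θ ^ 2) / b))
    _ = _ := by
        rw [integral_pow_mul_exp_neg_Ioi, intervalIntegral.integral_of_le pi_pos.le,
          integral_Ioc_eq_integral_Ioo]

theorem integral_boundaryIntegrand_sphere {a : ℝ} (ha0 : 0 < a) (ha1 : a < 1) :
    ∫ ω : sphere (0 : ℝ³) 1, boundaryIntegrand (1 - a) ω ∂sphereMeasure =
      2 * π * ((1 - a)⁻¹ + arsinh √(a / (1 - a)) / √a) := by
  have hb : 0 < 1 - a := sub_pos.2 ha1
  have hhom := integral_mul_exp_neg_norm_of_homogeneous (volume : Measure ℝ³)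
    (f := boundaryIntegrand (1 - a)) fun r hr x => boundaryIntegrand_smul _ hr.le x
  have hangular : ∫ θ in 0..π, sin θ * (√(1 - a + (1 - (1 - a)) * cos θ ^ 2) / (1 - a)) =
      (1 + (1 - a) / √a * arsinh (√a / √(1 - a))) / (1 - a) := by
    rw [sub_sub_cancel, integral_sin_mul_comp_cos (g := fun t => √(1 - a + a * t ^ 2) / (1 - a))
      (by fun_prop), intervalIntegral.integral_div, integral_sqrt_add_mul_sq ha0 hb,
      sub_add_cancel, sqrt_one]
  rw [finrank_euclideanSpace_fin, integral_boundaryIntegrand_mul_exp_neg_norm hb (by linarith),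
    hangular] at hhom
  rw [sphereMeasure, sqrt_div ha0.le]
  have hsa : 0 < √a := sqrt_pos.2 ha0
  field_simp at hhom ⊢
  linear_combination -hhom

/-- For `0 < a < 1`, the displaced-Werner boundary integral evaluates to
`(1/2π) ∫_{S²} √((x₁²+x₂²)/(1−a) + x₃²/(1−a)²) dσ = 1/(1−a) + arcsinh(√(a/(1−a)))/√a`,
and consequently `ξ(a) = [1/(1−a) + arcsinh(√(a/(1−a)))/√a]⁻¹` is the unique `ξ > 0` with
`(ξ/2π) ∫_{S²} √((x₁²+x₂²)/(1−a) + x₃²/(1−a)²) dσ = 1`. -/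
theorem displaced_werner_boundary (a : ℝ) (ha0 : 0 < a) (ha1 : a < 1) :
    (2 * Real.pi)⁻¹ *
      (∫ x : Metric.sphere (0 : EuclideanSpace ℝ (Fin 3)) 1,
        Real.sqrt (((x : EuclideanSpace ℝ (Fin 3)) 0 ^ 2 +
            (x : EuclideanSpace ℝ (Fin 3)) 1 ^ 2) / (1 - a) +
          (x : EuclideanSpace ℝ (Fin 3)) 2 ^ 2 / (1 - a) ^ 2) ∂sphereMeasure) =
      (1 - a)⁻¹ + Real.arsinh (Real.sqrt (a / (1 - a))) / Real.sqrt a ∧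
    ∀ ξ : ℝ, 0 < ξ →
      (ξ / (2 * Real.pi) *
        (∫ x : Metric.sphere (0 : EuclideanSpace ℝ (Fin 3)) 1,
          Real.sqrt (((x : EuclideanSpace ℝ (Fin 3)) 0 ^ 2 +
              (x : EuclideanSpace ℝ (Fin 3)) 1 ^ 2) / (1 - a) +
            (x : EuclideanSpace ℝ (Fin 3)) 2 ^ 2 / (1 - a) ^ 2) ∂sphereMeasure) = 1 ↔
        ξ = ((1 - a)⁻¹ + Real.arsinh (Real.sqrt (a / (1 - a))) / Real.sqrt a)⁻¹) := by
  have hI := integral_boundaryIntegrand_sphere ha0 ha1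
  unfold boundaryIntegrand at hI
  set R := (1 - a)⁻¹ + Real.arsinh (Real.sqrt (a / (1 - a))) / Real.sqrt a
  have hR : 0 < R := add_pos_of_pos_of_nonneg (inv_pos.2 (sub_pos.2 ha1))
    (div_nonneg (arsinh_nonneg_iff.2 (sqrt_nonneg _)) (sqrt_nonneg _))
  have h2π : 2 * π ≠ 0 := by positivity
  rw [hI, inv_mul_cancel_left₀ h2π]
  refine ⟨rfl, fun ξ _ => ?_⟩
  rw [div_mul_eq_mul_div, mul_left_comm, mul_div_cancel_left₀ _ h2π]
  exact mul_eq_one_iff_eq_inv₀ hR.ne'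
end
end
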